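/- arXiv:2101.08004 — 8 statements merged into one kernel-verified Lean document; each statement's English description precedes it below -/
import Mathlib

section
/- For every n ≥ 2, the graph K_2 ∨ T_2(n-2) (the join of an edge with the complete bipartite Turán graph on n-2 vertices) is B_{4,1}-free and contains exactly ⌊(n-2)²/4⌋ copies of K_4. -/
open SimpleGraph

/-- The number of copies of `K_r` in `G`. -/
noncomputable def cliqueCount {V : Type*} (G : SimpleGraph V) (r : ℕ) : ℕ :=
  Set.ncard {S : Finset V | G.IsNClique r S}

/-- `G` is `B_{r,s}`-free: no two copies of `K_r` in `G` share exactly `s` vertices. -/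
def BFree {V : Type*} [DecidableEq V] (G : SimpleGraph V) (r s : ℕ) : Prop :=
  ∀ S T : Finset V, G.IsNClique r S → G.IsNClique r T → (S ∩ T).card ≠ s

/-- The join of two graphs: all cross edges are present. -/
def SimpleGraph.join {α β : Type*} (G : SimpleGraph α) (H : SimpleGraph β) :
    SimpleGraph (α ⊕ β) where
  Adj x y :=
    match x, y with
    | Sum.inl a, Sum.inl b => G.Adj a b
    | Sum.inr a, Sum.inr b => H.Adj a b
    | Sum.inl _, Sum.inr _ => True
    | Sum.inr _, Sum.inl _ => True
  symm := ⟨by rintro (a | a) (b | b) h <;> simp_all [SimpleGraph.adj_comm]⟩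
  loopless := ⟨by rintro (a | a) h <;> simp_all⟩

/-!
If `H` is `K_{k+1}`-free, a clique of `K_a ∨ H` on `a + k` vertices meets `H` in at most `k`
vertices, so it contains all `a` vertices of `K_a` and meets `H` in a `k`-clique. Hence any two
such cliques share at least `a` vertices, and they correspond bijectively to the `k`-cliques
of `H`. For `a = k = 2` and `H = T_2(m)`, which is triangle-free, the copies of `K_4` correspond
to the `⌈m/2⌉⌊m/2⌋ = ⌊m²/4⌋` edges of `T_2(m)`.
-/

open Finset

namespace SimpleGraph

variable {α β : Type*} {G : SimpleGraph α} {H : SimpleGraph β}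

theorem IsClique.card_lt_of_cliqueFree {n : ℕ} {s : Finset α} (hs : G.IsClique (s : Set α))
    (hG : G.CliqueFree n) : #s < n := by
  by_contra! h
  obtain ⟨t, hts, ht⟩ := exists_subset_card_eq h
  exact hG t ⟨hs.subset hts, ht⟩

theorem isClique_join_iff {S : Finset (α ⊕ β)} :
    (G.join H).IsClique (S : Set (α ⊕ β)) ↔
      G.IsClique (S.toLeft : Set α) ∧ H.IsClique (S.toRight : Set β) := by
  refine ⟨fun h => ⟨fun a ha b hb hab => ?_, fun a ha b hb hab => ?_⟩, ?_⟩
  · exact h (mem_toLeft.1 ha) (mem_toLeft.1 hb) (Sum.inl_injective.ne hab)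
  · exact h (mem_toRight.1 ha) (mem_toRight.1 hb) (Sum.inr_injective.ne hab)
  · rintro ⟨hG, hH⟩ (a | a) ha (b | b) hb hab
    · exact hG (mem_toLeft.2 ha) (mem_toLeft.2 hb) (fun h => hab (h ▸ rfl))
    · trivial
    · trivial
    · exact hH (mem_toRight.2 ha) (mem_toRight.2 hb) (fun h => hab (h ▸ rfl))

variable [Fintype α] {k : ℕ}

theorem isNClique_top_join_iff (hH : H.CliqueFree (k + 1)) {S : Finset (α ⊕ β)} :
    ((⊤ : SimpleGraph α).join H).IsNClique (Fintype.card α + k) S ↔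
      S.toLeft = univ ∧ H.IsNClique k S.toRight := by
  rw [isNClique_iff, isNClique_iff, isClique_join_iff, ← card_toLeft_add_card_toRight]
  constructor
  · rintro ⟨⟨-, hR⟩, hcard⟩
    have hR_le := Nat.lt_succ_iff.1 (hR.card_lt_of_cliqueFree hH)
    have hL_le := card_le_univ S.toLeft
    exact ⟨eq_univ_of_card _ (by omega), hR, by omega⟩
  · rintro ⟨hL, hR, hcard⟩
    exact ⟨⟨IsClique.top _, hR⟩, by rw [hL, card_univ, hcard]⟩

theorem cliqueCount_top_join (hH : H.CliqueFree (k + 1)) :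
    cliqueCount ((⊤ : SimpleGraph α).join H) (Fintype.card α + k) = cliqueCount H k := by
  have : {S | ((⊤ : SimpleGraph α).join H).IsNClique (Fintype.card α + k) S} =
      univ.disjSum '' {T | H.IsNClique k T} := by
    ext S
    simp only [Set.mem_ofPred_eq, Set.mem_image, isNClique_top_join_iff hH, disjSum_eq_iff]
    exact ⟨fun ⟨hL, hR⟩ => ⟨_, hR, hL.symm, rfl⟩, fun ⟨T, hT, hL, hR⟩ => ⟨hL.symm, hR ▸ hT⟩⟩
  rw [cliqueCount, cliqueCount, this,
    Set.ncard_image_of_injective _ (Injective2_disjSum.right _)]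

theorem card_le_card_inter_of_isNClique_top_join [DecidableEq α] [DecidableEq β]
    (hH : H.CliqueFree (k + 1)) {S T : Finset (α ⊕ β)}
    (hS : ((⊤ : SimpleGraph α).join H).IsNClique (Fintype.card α + k) S)
    (hT : ((⊤ : SimpleGraph α).join H).IsNClique (Fintype.card α + k) T) :
    Fintype.card α ≤ #(S ∩ T) := by
  rw [isNClique_top_join_iff hH] at hS hT
  calc Fintype.card α = #(univ.map .inl) := by simp
    _ ≤ #(S ∩ T) := card_le_card <| map_inl_subset_iff_subset_toLeft.2 <| by
      rw [toLeft_inter, hS.1, hT.1, inter_self]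

theorem bFree_top_join [DecidableEq α] [DecidableEq β] (hH : H.CliqueFree (k + 1)) {s : ℕ}
    (hs : s < Fintype.card α) : BFree ((⊤ : SimpleGraph α).join H) (Fintype.card α + k) s :=
  fun _ _ hS hT h => by
    have := card_le_card_inter_of_isNClique_top_join hH hS hT
    omega

end SimpleGraph

theorem cliqueCount_two {α : Type*} (G : SimpleGraph α) [Fintype G.edgeSet] :
    cliqueCount G 2 = #G.edgeFinset := by
  classical
  have : {S | G.IsNClique 2 S} = Sym2.toFinset '' G.edgeSet := by
    ext S
    constructor
    · rintro ⟨hS, hcard⟩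
      obtain ⟨a, b, hab, rfl⟩ := card_eq_two.1 hcard
      rw [coe_pair, isClique_pair] at hS
      exact ⟨s(a, b), hS hab, Sym2.toFinset_mk_eq⟩
    · rintro ⟨e, he, rfl⟩
      induction e using Sym2.ind with
      | h a b =>
        rw [Sym2.toFinset_mk_eq]
        exact ⟨by rw [coe_pair, isClique_pair]; exact fun _ => he, card_pair (G.ne_of_adj he)⟩
  rw [cliqueCount, this, Set.ncard_image_of_injective _ fun z w h =>
    Sym2.ext fun x => by rw [← Sym2.mem_toFinset, h, Sym2.mem_toFinset],
    Set.ncard_eq_toFinset_card', edgeFinset]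

theorem card_edgeFinset_turanGraph_two (m : ℕ) : #(turanGraph m 2).edgeFinset = m ^ 2 / 4 := by
  rw [card_edgeFinset_turanGraph]
  rcases Nat.even_or_odd' m with ⟨k, rfl | rfl⟩
  · rw [show (2 * k) ^ 2 = 4 * k ^ 2 by ring]
    simp
  · rw [show (2 * k + 1) % 2 = 1 by omega, show (2 * k + 1) ^ 2 = 4 * (k ^ 2 + k) + 1 by ring,
      Nat.choose_eq_zero_of_lt one_lt_two]
    omega

theorem stmt1_general (n : ℕ) :
    BFree ((⊤ : SimpleGraph (Fin 2)).join (turanGraph (n - 2) 2)) 4 1 ∧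
    cliqueCount ((⊤ : SimpleGraph (Fin 2)).join (turanGraph (n - 2) 2)) 4 =
      (n - 2) ^ 2 / 4 := by
  have hT : (turanGraph (n - 2) 2).CliqueFree (2 + 1) := turanGraph_cliqueFree two_pos
  refine ⟨bFree_top_join (α := Fin 2) hT (by simp), ?_⟩
  rw [← card_edgeFinset_turanGraph_two, ← cliqueCount_two, ← cliqueCount_top_join (α := Fin 2) hT]
  rfl

/-- For `n ≥ 2`, the graph `K_2 ∨ T_2(n-2)` is `B_{4,1}`-free and contains exactly
`⌊(n-2)²/4⌋` copies of `K_4`. -/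
theorem stmt1 (n : ℕ) (hn : 2 ≤ n) :
    BFree ((⊤ : SimpleGraph (Fin 2)).join (turanGraph (n - 2) 2)) 4 1 ∧
    cliqueCount ((⊤ : SimpleGraph (Fin 2)).join (turanGraph (n - 2) 2)) 4 =
      (n - 2) ^ 2 / 4 :=
  stmt1_general n
end

section
/- Let G be a B_{4,1}-free graph, and let E_1 be the set of edges e of G such that there exist two copies K, K' of K_4 in G, both containing e, with E(K) ∩ E(K') = {e}. If G is also H_1-free and K_5-free, then E_1 is a matching in G, where H_1 is the 7-vertex graph consisting of a K_4 on {i,j,k,m} together with vertices h adjacent to i,j,k, vertex l adjacent to i,k,m, and vertex n adjacent to j,k,m. -/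
open SimpleGraph

/-- `G` contains a (not necessarily induced) copy of `H`. -/
def ContainsCopy {α β : Type*} (G : SimpleGraph α) (H : SimpleGraph β) : Prop :=
  ∃ f : β ↪ α, ∀ a b, H.Adj a b → G.Adj (f a) (f b)

/-- The 7-vertex graph `H₁` with vertices `h=0, i=1, j=2, k=3, l=4, m=5, n=6`,
whose copies of `K₄` are on `{h,i,j,k}`, `{i,j,k,m}`, `{i,k,l,m}`, `{j,k,m,n}`. -/
def H1 : SimpleGraph (Fin 7) :=
  SimpleGraph.fromRel (fun a b =>
    (a, b) ∈ [((0 : Fin 7), (1 : Fin 7)), (0, 2), (0, 3), (1, 2), (1, 3), (2, 3),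
      (1, 5), (2, 5), (3, 5), (1, 4), (3, 4), (4, 5), (2, 6), (3, 6), (5, 6)])

/-- The edge set of the complete graph on a vertex subset `S`. -/
def edgesOf {V : Type*} (S : Finset V) : Set (Sym2 V) :=
  {e | ¬ e.IsDiag ∧ ∀ x ∈ e, x ∈ S}

/-- The set `E₁` of edges `e` of `G` lying in two copies of `K₄` whose edge sets
intersect exactly in `{e}`. -/
def E1 {V : Type*} (G : SimpleGraph V) : Set (Sym2 V) :=
  {e | e ∈ G.edgeSet ∧ ∃ K K' : Finset V, G.IsNClique 4 K ∧ G.IsNClique 4 K' ∧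
    e ∈ edgesOf K ∧ e ∈ edgesOf K' ∧ edgesOf K ∩ edgesOf K' = {e}}

/-!
Let `e = ab` and `f = ac` be edges of `E₁` with the common endpoint `a`, witnessed by copies
`K, K'` of `K₄` meeting exactly in `{a, b}` and `L, L'` meeting exactly in `{a, c}`. Since `G` is
`B_{4,1}`-free, any two of these four cliques share a vertex besides `a`.

If `c ∈ K`, choose `L` among `L, L'` with `b ∉ L` and let `s ≠ a` be a common vertex of `K'` and
`L`. The fourth vertex of `K` avoids `L`, and the fourth vertices of `K'` and `L` differ, since
otherwise `s`, resp. `c`, would extend `K`, resp. `K'`, to a `K₅`. Then `K ∪ K' ∪ L` contains a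
copy of `H₁`, which is the union of the three `K₄`s on `{h,i,j,k}`, `{i,k,l,m}`, `{j,k,m,n}`.
If neither `c ∈ K ∪ K'` nor `b ∈ L ∪ L'`, the second common vertices of `K` with `L` and `L'`
and of `K'` with `L` and `L'` give a copy of `H₁` inside `K ∪ L ∪ L'`.
-/

open Finset

section

variable {V : Type*} {G : SimpleGraph V}

lemma containsCopy_H1 {h i j k l m n : V}
    (hhi : G.Adj h i) (hhj : G.Adj h j) (hhk : G.Adj h k) (hij : G.Adj i j)
    (hik : G.Adj i k) (hjk : G.Adj j k) (him : G.Adj i m) (hjm : G.Adj j m)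
    (hkm : G.Adj k m) (hil : G.Adj i l) (hkl : G.Adj k l) (hlm : G.Adj l m)
    (hjn : G.Adj j n) (hkn : G.Adj k n) (hmn : G.Adj m n)
    (hhl : h ≠ l) (hhm : h ≠ m) (hhn : h ≠ n) (hin : i ≠ n) (hjl : j ≠ l) (hln : l ≠ n) :
    ContainsCopy G H1 := by
  have hinj : Function.Injective ![h, i, j, k, l, m, n] := by
    rw [← List.nodup_ofFn]
    simp [hhi.ne, hhj.ne, hhk.ne, hij.ne, hik.ne, hjk.ne, him.ne, hjm.ne, hkm.ne, hil.ne,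
      hkl.ne, hlm.ne, hjn.ne, hkn.ne, hmn.ne, hhl, hhm, hhn, hin, hjl, hln]
  refine ⟨⟨_, hinj⟩, fun x y hxy => ?_⟩
  fin_cases x <;> fin_cases y <;> simp [H1] at hxy ⊢ <;> grind [Adj.symm]

variable [DecidableEq V]

lemma edgesOf_inter (S T : Finset V) : edgesOf (S ∩ T) = edgesOf S ∩ edgesOf T := by
  ext e
  simp only [edgesOf, Set.mem_inter_iff, Set.mem_ofPred_eq, mem_inter]
  grind

lemma eq_pair_of_edgesOf_eq_singleton {S : Finset V} {a b : V} (h : edgesOf S = {s(a, b)}) :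
    S = {a, b} := by
  have hab : s(a, b) ∈ edgesOf S := h ▸ rfl
  have haS : a ∈ S := hab.2 a (Sym2.mem_mk_left a b)
  have hbS : b ∈ S := hab.2 b (Sym2.mem_mk_right a b)
  refine Subset.antisymm (fun z hz => ?_) (by simp [insert_subset_iff, haS, hbS])
  by_cases hza : z = a
  · simp [hza]
  have haz : s(a, z) ∈ edgesOf S := ⟨by simpa using Ne.symm hza, by simp [haS, hz]⟩
  rw [h, Set.mem_singleton_iff, Sym2.eq_iff] at haz
  grind

lemma exists_inter_eq_pair_of_mk_mem_E1 {a b : V} (h : s(a, b) ∈ E1 G) :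
    G.Adj a b ∧
      ∃ K K' : Finset V, G.IsNClique 4 K ∧ G.IsNClique 4 K' ∧ K ∩ K' = {a, b} := by
  obtain ⟨hab, K, K', hK, hK', -, -, hKK'⟩ := h
  exact ⟨hab, K, K', hK, hK', eq_pair_of_edgesOf_eq_singleton (by rw [edgesOf_inter, hKK'])⟩

lemma mem_of_inter_eq_pair {K K' : Finset V} {a b : V} (h : K ∩ K' = {a, b}) :
    (a ∈ K ∧ a ∈ K') ∧ b ∈ K ∧ b ∈ K' := by
  simp [← mem_inter, h]

lemma notMem_of_inter_eq_pair {K K' : Finset V} {a b x : V} (h : K ∩ K' = {a, b})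
    (hx : x ∈ K) (hxa : x ≠ a) (hxb : x ≠ b) : x ∉ K' := by
  intro hx'
  simpa [h, hxa, hxb] using mem_inter.2 ⟨hx, hx'⟩

lemma exists_insert_eq_of_card_eq_four {K : Finset V} (hK : #K = 4) {a b c : V}
    (ha : a ∈ K) (hb : b ∈ K) (hc : c ∈ K) (hab : a ≠ b) (hac : a ≠ c) (hbc : b ≠ c) :
    ∃ y ∉ ({a, b, c} : Finset V), insert y {a, b, c} = K :=
  exists_eq_insert_iff.2 ⟨by simp [insert_subset_iff, ha, hb, hc],
    by rw [card_eq_three.2 ⟨a, b, c, hab, hac, hbc, rfl⟩, hK]⟩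

lemma BFree.exists_mem_inter_ne {r : ℕ} (hB : BFree G r 1) {K L : Finset V}
    (hK : G.IsNClique r K) (hL : G.IsNClique r L) {a : V} (haK : a ∈ K) (haL : a ∈ L) :
    ∃ s, s ∈ K ∧ s ∈ L ∧ s ≠ a := by
  have hcard : 1 < #(K ∩ L) :=
    lt_of_le_of_ne (card_pos.2 ⟨a, mem_inter.2 ⟨haK, haL⟩⟩) (hB K L hK hL).symm
  obtain ⟨s, hs, hsa⟩ := exists_mem_ne hcard a
  exact ⟨s, (mem_inter.1 hs).1, (mem_inter.1 hs).2, hsa⟩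

lemma false_of_mem_clique_of_notMem (hB : BFree G 4 1) (hH : ¬ ContainsCopy G H1)
    (hK5 : G.CliqueFree 5) {a b c : V} (hab : G.Adj a b) (hac : G.Adj a c) (hbc : b ≠ c)
    {K K' L : Finset V} (hK : G.IsNClique 4 K) (hK' : G.IsNClique 4 K') (hL : G.IsNClique 4 L)
    (hKK' : K ∩ K' = {a, b}) (haL : a ∈ L) (hcL : c ∈ L) (hcK : c ∈ K) (hbL : b ∉ L) :
    False := by
  obtain ⟨⟨haK, haK'⟩, hbK, hbK'⟩ := mem_of_inter_eq_pair hKK'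
  have hcK' : c ∉ K' := notMem_of_inter_eq_pair hKK' hcK hac.ne' hbc.symm
  obtain ⟨s, hsK', hsL, hsa⟩ := hB.exists_mem_inter_ne hK' hL haK' haL
  have hsb : s ≠ b := ne_of_mem_of_not_mem hsL hbL
  have hsc : s ≠ c := ne_of_mem_of_not_mem hsK' hcK'
  obtain ⟨y, hy, rfl⟩ := exists_insert_eq_of_card_eq_four hK.2 haK hbK hcK hab.ne hac.ne hbc
  obtain ⟨hya, hyb, hyc⟩ : y ≠ a ∧ y ≠ b ∧ y ≠ c := by simpa using hy
  have hyK' : y ∉ K' := notMem_of_inter_eq_pair hKK' (mem_insert_self _ _) hya hyb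
  have hyL : y ∉ L := by
    intro hyL
    refine (hK.insert (a := s) ?_).not_cliqueFree hK5
    simp only [mem_insert, mem_singleton, forall_eq_or_imp, forall_eq]
    exact ⟨hL.1 hsL hyL (ne_of_mem_of_not_mem hsK' hyK'), hK'.1 hsK' haK' hsa,
      hK'.1 hsK' hbK' hsb, hL.1 hsL hcL hsc⟩
  obtain ⟨p, hp, rfl⟩ :=
    exists_insert_eq_of_card_eq_four hK'.2 haK' hbK' hsK' hab.ne hsa.symm hsb.symm
  obtain ⟨q, hq, rfl⟩ :=
    exists_insert_eq_of_card_eq_four hL.2 haL hcL hsL hac.ne hsa.symm hsc.symm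
  obtain ⟨hpa, hpb, hps⟩ : p ≠ a ∧ p ≠ b ∧ p ≠ s := by simpa using hp
  obtain ⟨hqa, hqc, hqs⟩ : q ≠ a ∧ q ≠ c ∧ q ≠ s := by simpa using hq
  have hpq : p ≠ q := by
    rintro rfl
    refine (hK'.insert (a := c) ?_).not_cliqueFree hK5
    simp only [mem_insert, mem_singleton, forall_eq_or_imp, forall_eq]
    exact ⟨hL.1 hcL (mem_insert_self _ _) hqc.symm, hac.symm,
      hK.1 (by simp) (by simp) hbc.symm, hL.1 hcL hsL hsc.symm⟩
  -- `H₁` is the union of the cliques `K = {h,i,j,k}`, `K' = {i,k,l,m}` and `L = {j,k,m,n}`.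
  exact hH (containsCopy_H1 (h := y) (i := b) (j := c) (k := a) (l := p) (m := s) (n := q)
    (hK.1 (by simp) (by simp) hyb) (hK.1 (by simp) (by simp) hyc) (hK.1 (by simp) (by simp) hya)
    (hK.1 (by simp) (by simp) hbc) hab.symm hac.symm
    (hK'.1 hbK' hsK' hsb.symm) (hL.1 hcL hsL hsc.symm) (hK'.1 haK' hsK' hsa.symm)
    (hK'.1 hbK' (by simp) hpb.symm) (hK'.1 haK' (by simp) hpa.symm) (hK'.1 (by simp) hsK' hps)
    (hL.1 hcL (by simp) hqc.symm) (hL.1 haL (by simp) hqa.symm) (hL.1 hsL (by simp) hqs.symm)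
    (ne_of_mem_of_not_mem (by simp) hyK').symm (ne_of_mem_of_not_mem hsK' hyK').symm
    (ne_of_mem_of_not_mem (by simp) hyL).symm (ne_of_mem_of_not_mem (by simp) hbL).symm
    (ne_of_mem_of_not_mem (by simp) hcK').symm hpq)

lemma false_of_mem_union (hB : BFree G 4 1) (hH : ¬ ContainsCopy G H1) (hK5 : G.CliqueFree 5)
    {a b c : V} (hab : G.Adj a b) (hac : G.Adj a c) (hbc : b ≠ c) {K K' L L' : Finset V}
    (hK : G.IsNClique 4 K) (hK' : G.IsNClique 4 K') (hL : G.IsNClique 4 L)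
    (hL' : G.IsNClique 4 L') (hKK' : K ∩ K' = {a, b}) (hLL' : L ∩ L' = {a, c})
    (hc : c ∈ K ∪ K') : False := by
  wlog hcK : c ∈ K generalizing K K'
  · exact this hK' hK (by rwa [inter_comm]) (by rwa [union_comm])
      ((mem_union.1 hc).resolve_left hcK)
  obtain ⟨⟨haL, haL'⟩, hcL, hcL'⟩ := mem_of_inter_eq_pair hLL'
  by_cases hbL : b ∈ L
  · exact false_of_mem_clique_of_notMem hB hH hK5 hab hac hbc hK hK' hL' hKK' haL' hcL' hcK
      (notMem_of_inter_eq_pair hLL' hbL hab.ne' hbc)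
  · exact false_of_mem_clique_of_notMem hB hH hK5 hab hac hbc hK hK' hL hKK' haL hcL hcK hbL

lemma false_of_notMem_union (hB : BFree G 4 1) (hH : ¬ ContainsCopy G H1) {a b c : V}
    (hab : G.Adj a b) (hac : G.Adj a c) (hbc : b ≠ c) {K K' L L' : Finset V}
    (hK : G.IsNClique 4 K) (hK' : G.IsNClique 4 K') (hL : G.IsNClique 4 L)
    (hL' : G.IsNClique 4 L') (hKK' : K ∩ K' = {a, b}) (hLL' : L ∩ L' = {a, c})
    (hc : c ∉ K ∪ K') (hb : b ∉ L ∪ L') : False := by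
  obtain ⟨hcK, hcK'⟩ : c ∉ K ∧ c ∉ K' := by simpa using hc
  obtain ⟨hbL, hbL'⟩ : b ∉ L ∧ b ∉ L' := by simpa using hb
  obtain ⟨⟨haK, haK'⟩, hbK, -⟩ := mem_of_inter_eq_pair hKK'
  obtain ⟨⟨haL, haL'⟩, hcL, hcL'⟩ := mem_of_inter_eq_pair hLL'
  obtain ⟨s, hsK, hsL, hsa⟩ := hB.exists_mem_inter_ne hK hL haK haL
  obtain ⟨s', hs'K, hs'L', hs'a⟩ := hB.exists_mem_inter_ne hK hL' haK haL'
  obtain ⟨t, htK', htL, hta⟩ := hB.exists_mem_inter_ne hK' hL haK' haL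
  obtain ⟨t', ht'K', ht'L', ht'a⟩ := hB.exists_mem_inter_ne hK' hL' haK' haL'
  have hsK' : s ∉ K' := notMem_of_inter_eq_pair hKK' hsK hsa (ne_of_mem_of_not_mem hsL hbL)
  have hs'K' : s' ∉ K' :=
    notMem_of_inter_eq_pair hKK' hs'K hs'a (ne_of_mem_of_not_mem hs'L' hbL')
  have hsL' : s ∉ L' := notMem_of_inter_eq_pair hLL' hsL hsa (ne_of_mem_of_not_mem hsK hcK)
  have htL' : t ∉ L' := notMem_of_inter_eq_pair hLL' htL hta (ne_of_mem_of_not_mem htK' hcK')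
  -- `H₁` is the union of the cliques `K = {h,i,j,k}`, `L = {i,k,l,m}` and `L' = {j,k,m,n}`.
  exact hH (containsCopy_H1 (h := b) (i := s) (j := s') (k := a) (l := t) (m := c) (n := t')
    (hK.1 hbK hsK (ne_of_mem_of_not_mem hsL hbL).symm)
    (hK.1 hbK hs'K (ne_of_mem_of_not_mem hs'L' hbL').symm) hab.symm
    (hK.1 hsK hs'K (ne_of_mem_of_not_mem hs'L' hsL').symm) (hK.1 hsK haK hsa)
    (hK.1 hs'K haK hs'a) (hL.1 hsL hcL (ne_of_mem_of_not_mem hsK hcK))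
    (hL'.1 hs'L' hcL' (ne_of_mem_of_not_mem hs'K hcK)) hac
    (hL.1 hsL htL (ne_of_mem_of_not_mem htK' hsK').symm) (hL.1 haL htL hta.symm)
    (hL.1 htL hcL (ne_of_mem_of_not_mem htK' hcK'))
    (hL'.1 hs'L' ht'L' (ne_of_mem_of_not_mem ht'K' hs'K').symm) (hL'.1 haL' ht'L' ht'a.symm)
    (hL'.1 hcL' ht'L' (ne_of_mem_of_not_mem ht'K' hcK').symm)
    (ne_of_mem_of_not_mem htL hbL).symm hbc (ne_of_mem_of_not_mem ht'L' hbL').symm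
    (ne_of_mem_of_not_mem ht'K' hsK').symm (ne_of_mem_of_not_mem htK' hs'K').symm
    (ne_of_mem_of_not_mem ht'L' htL').symm)

end

/-- If `G` is `{B_{4,1}, H₁, K₅}`-free, then `E₁` is a matching in `G`. -/
theorem stmt2 {V : Type*} [DecidableEq V] (G : SimpleGraph V)
    (hB : BFree G 4 1) (hH : ¬ ContainsCopy G H1) (hK : G.CliqueFree 5) :
    ∀ e ∈ E1 G, ∀ f ∈ E1 G, e ≠ f → ∀ v : V, v ∈ e → v ∉ f := by
  rintro e he f hf hef a hae haf
  obtain ⟨b, rfl⟩ := Sym2.mem_iff_exists.1 hae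
  obtain ⟨c, rfl⟩ := Sym2.mem_iff_exists.1 haf
  have hbc : b ≠ c := by rintro rfl; exact hef rfl
  obtain ⟨hab, K, K', hK4, hK'4, hKK'⟩ := exists_inter_eq_pair_of_mk_mem_E1 he
  obtain ⟨hac, L, L', hL4, hL'4, hLL'⟩ := exists_inter_eq_pair_of_mk_mem_E1 hf
  by_cases hc : c ∈ K ∪ K'
  · exact false_of_mem_union hB hH hK hab hac hbc hK4 hK'4 hL4 hL'4 hKK' hLL' hc
  by_cases hb : b ∈ L ∪ L'
  · exact false_of_mem_union hB hH hK hac hab hbc.symm hL4 hL'4 hK4 hK'4 hLL' hKK' hb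
  exact false_of_notMem_union hB hH hab hac hbc hK4 hK'4 hL4 hL'4 hKK' hLL' hc hb
end

section
/- Let G be a {B_{4,1}, H_1, K_5}-free graph in which every edge lies in at least one copy of K_4, and let E_1 be the set of edges lying in two copies of K_4 whose edge sets intersect only in that edge. Then for every copy K of K_4 in G and every edge uv ∈ E_1, the intersection |V(K) ∩ {u,v}| is not equal to 1. -/
open SimpleGraph

/-!
Let `A`, `B` be copies of `K₄` with `A ∩ B = {u, v}` and `K` a copy of `K₄` with `u ∈ K`,
`v ∉ K`. Since `G` is `B_{4,1}`-free, `K` meets `A` in a second vertex `a` and `B` in a second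
vertex `b`. If `|K ∩ A| ≥ 3`, then `A = (K ∩ A) ∪ {v}` is entirely adjacent to `b`, giving a `K₅`;
likewise for `B`. Hence `|K ∩ A| = |K ∩ B| = |A ∩ B| = 2`, so all seven regions of the Venn
diagram of `K`, `A`, `B` are nonempty, and one vertex from each region spans a copy of `H₁`:
every edge of `H₁` lies inside one of its copies `{h,i,j,k}`, `{i,k,l,m}`, `{j,k,m,n}` of `K₄`.
-/

open Finset

section

variable {V : Type*} {G : SimpleGraph V}

lemma mem_edgesOf {S : Finset V} {x y : V} :
    s(x, y) ∈ edgesOf S ↔ x ≠ y ∧ x ∈ S ∧ y ∈ S := by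
  constructor
  · rintro ⟨hd, hm⟩
    exact ⟨fun h => hd (by simp [h]), hm x (by simp), hm y (by simp)⟩
  · rintro ⟨hxy, hx, hy⟩
    refine ⟨by simp [hxy], fun z hz => ?_⟩
    rcases Sym2.mem_iff.1 hz with rfl | rfl
    exacts [hx, hy]

/-- Which of the copies `{h,i,j,k}`, `{i,k,l,m}`, `{j,k,m,n}` of `K₄` in `H1` contain each
vertex. -/
def H1venn : Fin 7 → Bool × Bool × Bool :=
  ![(true, false, false), (true, true, false), (true, false, true), (true, true, true),
    (false, true, false), (false, true, true), (false, false, true)]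

lemma H1venn_injective : Function.Injective H1venn := by
  decide

instance : DecidableRel H1.Adj := fun a b =>
  decidable_of_iff _ (SimpleGraph.fromRel_adj _ a b).symm

lemma H1_adj_venn {p q : Fin 7} (h : H1.Adj p q) :
    ((H1venn p).1 ∧ (H1venn q).1) ∨ ((H1venn p).2.1 ∧ (H1venn q).2.1) ∨
      ((H1venn p).2.2 ∧ (H1venn q).2.2) := by
  revert p q
  decide

variable [DecidableEq V]

lemma inter_eq_pair_of_edgesOf_inter_eq {A B : Finset V} {u v : V}
    (hA : s(u, v) ∈ edgesOf A) (hB : s(u, v) ∈ edgesOf B)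
    (hAB : edgesOf A ∩ edgesOf B = {s(u, v)}) : A ∩ B = {u, v} := by
  obtain ⟨huv, huA, hvA⟩ := mem_edgesOf.1 hA
  obtain ⟨-, huB, hvB⟩ := mem_edgesOf.1 hB
  ext w
  simp only [mem_inter, mem_insert, mem_singleton]
  constructor
  · rintro ⟨hwA, hwB⟩
    by_contra! hw
    have : s(u, w) ∈ edgesOf A ∩ edgesOf B :=
      ⟨mem_edgesOf.2 ⟨hw.1.symm, huA, hwA⟩, mem_edgesOf.2 ⟨hw.1.symm, huB, hwB⟩⟩
    rw [hAB, Set.mem_singleton_iff, Sym2.eq_iff] at this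
    rcases this with ⟨-, rfl⟩ | ⟨rfl, -⟩
    exacts [hw.2 rfl, huv rfl]
  · rintro (rfl | rfl)
    exacts [⟨huA, huB⟩, ⟨hvA, hvB⟩]

lemma containsCopy_H1_of_venn {K A B : Finset V} (hK : G.IsClique (K : Set V))
    (hA : G.IsClique (A : Set V)) (hB : G.IsClique (B : Set V))
    (hregion : ∀ p, ∃ x, (decide (x ∈ K), decide (x ∈ A), decide (x ∈ B)) = H1venn p) :
    ContainsCopy G H1 := by
  choose f hf using hregion
  have hinj : Function.Injective f := fun p q h => H1venn_injective (by rw [← hf, ← hf, h])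
  refine ⟨⟨f, hinj⟩, fun p q hpq => ?_⟩
  have hne : f p ≠ f q := hinj.ne hpq.ne
  rcases H1_adj_venn hpq with ⟨hp, hq⟩ | ⟨hp, hq⟩ | ⟨hp, hq⟩ <;>
    rw [← hf p] at hp <;> rw [← hf q] at hq <;> simp only [decide_eq_true_eq] at hp hq
  exacts [hK hp hq hne, hA hp hq hne, hB hp hq hne]

lemma card_inter_add_two_le_of_cliqueFree {n : ℕ} {A K : Finset V} {b v : V}
    (hfree : G.CliqueFree (n + 1)) (hA : G.IsNClique n A) (hK : G.IsClique (K : Set V))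
    (hvA : v ∈ A) (hvK : v ∉ K) (hbK : b ∈ K) (hbA : b ∉ A) (hbv : G.Adj b v) :
    #(K ∩ A) + 2 ≤ n := by
  by_contra! hlt
  have hA_eq : insert v (K ∩ A) = A :=
    eq_of_subset_of_card_le (insert_subset hvA inter_subset_right)
      (by rw [card_insert_of_notMem (by simp [hvK]), hA.card_eq]; omega)
  refine hfree (insert b A) (hA.insert fun x hx => ?_)
  have hbx : b ≠ x := by rintro rfl; exact hbA hx
  rw [← hA_eq, mem_insert, mem_inter] at hx
  rcases hx with rfl | ⟨hxK, -⟩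
  exacts [hbv, hK hbK hxK hbx]

lemma exists_mem_notMem_notMem {K A B : Finset V} {u : V} (hu : u ∈ K ∩ A ∩ B)
    (hcard : #(K ∩ A) + #(K ∩ B) ≤ #K) : ∃ c ∈ K, c ∉ A ∧ c ∉ B := by
  have hlt : #(K ∩ A ∪ K ∩ B) < #K := by
    have hunion := card_union_add_card_inter (K ∩ A) (K ∩ B)
    have hpos : 0 < #((K ∩ A) ∩ (K ∩ B)) := card_pos.2 ⟨u, by simp_all⟩
    omega
  obtain ⟨c, hcK, hc⟩ := exists_mem_notMem_of_card_lt_card hlt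
  exact ⟨c, hcK, fun h => hc (by simp [hcK, h]), fun h => hc (by simp [hcK, h])⟩

theorem containsCopy_H1_of_inter_eq_pair (hB41 : BFree G 4 1) (hK5 : G.CliqueFree 5)
    {K A B : Finset V} (hK : G.IsNClique 4 K) (hA : G.IsNClique 4 A) (hB : G.IsNClique 4 B)
    {u v : V} (hAB : A ∩ B = {u, v}) (huK : u ∈ K) (hvK : v ∉ K) : ContainsCopy G H1 := by
  have huv : u ≠ v := by rintro rfl; exact hvK huK
  have mem_pair_of_mem_AB : ∀ {w}, w ∈ A → w ∈ B → w = u ∨ w = v := fun hwA hwB => by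
    simpa [hAB] using mem_inter.2 ⟨hwA, hwB⟩
  have hu : u ∈ A ∧ u ∈ B := mem_inter.1 (by simp [hAB])
  have hv : v ∈ A ∧ v ∈ B := mem_inter.1 (by simp [hAB])
  have exists_second : ∀ {X}, G.IsNClique 4 X → u ∈ X → ∃ a ∈ K ∩ X, a ≠ u := fun hX huX =>
    exists_mem_ne (lt_of_le_of_ne (one_le_card.2 ⟨u, mem_inter.2 ⟨huK, huX⟩⟩)
      (hB41 K _ hK hX).symm) u
  obtain ⟨a, haKA, hau⟩ := exists_second hA hu.1
  obtain ⟨b, hbKB, hbu⟩ := exists_second hB hu.2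
  rw [mem_inter] at haKA hbKB
  have hav : a ≠ v := by rintro rfl; exact hvK haKA.1
  have hbv : b ≠ v := by rintro rfl; exact hvK hbKB.1
  have haB : a ∉ B := fun haB => (mem_pair_of_mem_AB haKA.2 haB).elim hau hav
  have hbA : b ∉ A := fun hbA => (mem_pair_of_mem_AB hbA hbKB.2).elim hbu hbv
  have hKA := card_inter_add_two_le_of_cliqueFree hK5 hA hK.isClique hv.1 hvK hbKB.1 hbA
    (hB.isClique hbKB.2 hv.2 hbv)
  have hKB := card_inter_add_two_le_of_cliqueFree hK5 hB hK.isClique hv.2 hvK haKA.1 haB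
    (hA.isClique haKA.2 hv.1 hav)
  have hAB2 : #(A ∩ B) = 2 := by rw [hAB, card_pair huv]
  obtain ⟨c, hcK, hcA, hcB⟩ := exists_mem_notMem_notMem (K := K) (A := A) (B := B) (u := u)
    (by simp [huK, hu]) (by rw [hK.card_eq]; omega)
  obtain ⟨a', ha'A, ha'K, ha'B⟩ := exists_mem_notMem_notMem (K := A) (A := K) (B := B) (u := u)
    (by simp [huK, hu]) (by rw [inter_comm, hA.card_eq]; omega)
  obtain ⟨b', hb'B, hb'K, hb'A⟩ := exists_mem_notMem_notMem (K := B) (A := K) (B := A) (u := u)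
    (by simp [huK, hu]) (by rw [inter_comm, inter_comm B A, hB.card_eq]; omega)
  refine containsCopy_H1_of_venn hK.isClique hA.isClique hB.isClique fun p => ?_
  fin_cases p
  exacts [⟨c, by simp [H1venn, hcK, hcA, hcB]⟩, ⟨a, by simp [H1venn, haKA, haB]⟩,
    ⟨b, by simp [H1venn, hbKB, hbA]⟩, ⟨u, by simp [H1venn, huK, hu]⟩,
    ⟨a', by simp [H1venn, ha'A, ha'K, ha'B]⟩, ⟨v, by simp [H1venn, hvK, hv]⟩,
    ⟨b', by simp [H1venn, hb'B, hb'K, hb'A]⟩]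

end

theorem stmt3_general {V : Type*} [DecidableEq V] (G : SimpleGraph V)
    (hB : BFree G 4 1) (hH : ¬ ContainsCopy G H1) (hK : G.CliqueFree 5) :
    ∀ K : Finset V, G.IsNClique 4 K → ∀ u v : V, s(u, v) ∈ E1 G →
      (K ∩ {u, v}).card ≠ 1 := by
  intro K hK4 u v ⟨_, A, B, hA, hB', huvA, huvB, hAB⟩ hcard
  have hAB' := inter_eq_pair_of_edgesOf_inter_eq huvA huvB hAB
  have huv := (mem_edgesOf.1 huvA).1
  by_cases hu : u ∈ K <;> by_cases hv : v ∈ K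
  · simp [inter_insert_of_mem hu, inter_singleton_of_mem hv, huv] at hcard
  · exact hH (containsCopy_H1_of_inter_eq_pair hB hK hK4 hA hB' hAB' hu hv)
  · exact hH (containsCopy_H1_of_inter_eq_pair hB hK hK4 hA hB' (pair_comm u v ▸ hAB') hv hu)
  · simp [inter_insert_of_notMem hu, inter_singleton_of_notMem hv] at hcard

/-- If `G` is `{B_{4,1}, H₁, K₅}`-free and every edge of `G` lies in at least one
copy of `K₄`, then for every copy `K` of `K₄` in `G` and every edge `uv ∈ E₁`,
`|V(K) ∩ {u,v}| ≠ 1`. -/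
theorem stmt3 {V : Type*} [DecidableEq V] (G : SimpleGraph V)
    (hB : BFree G 4 1) (hH : ¬ ContainsCopy G H1) (hK : G.CliqueFree 5)
    (hedge : ∀ e ∈ G.edgeSet, ∃ K : Finset V, G.IsNClique 4 K ∧ e ∈ edgesOf K) :
    ∀ K : Finset V, G.IsNClique 4 K → ∀ u v : V, s(u, v) ∈ E1 G →
      (K ∩ {u, v}).card ≠ 1 :=
  stmt3_general G hB hH hK
end

section
/- Let G be a K_5-free graph and let M be a matching in G. Define an auxiliary graph H with vertex set M, where two matching edges e_1, e_2 are adjacent in H if and only if some copy of K_4 in G contains both e_1 and e_2. Then H is triangle-free, and consequently the number of copies of K_4 in G whose edge set contains two edges of M is at most ⌊|M|²/4⌋. -/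
/-!
Any `K₄` containing two disjoint matching edges `e`, `f` is exactly `e ∪ f`. If three matching
edges `a`, `b`, `c` were pairwise in copies of `K₄`, a vertex of `c` would be adjacent to all of
`a ∪ b`, giving a `K₅`; so the auxiliary graph is triangle-free. Every counted `K₄` is the union
`e ∪ f` of an auxiliary edge `{e, f}`, and Mantel's theorem bounds the number of those edges.
-/

open SimpleGraph

/-- The auxiliary graph on the edges of a matching `M`: two matching edges are
adjacent iff they are distinct and some copy of `K₄` in `G` contains both. -/
def auxGraph {V : Type*} (G : SimpleGraph V) (M : Finset (Sym2 V)) :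
    SimpleGraph {e // e ∈ M} :=
  SimpleGraph.fromRel (fun e f => ∃ K : Finset V, G.IsNClique 4 K ∧
    (∀ x ∈ (e : Sym2 V), x ∈ K) ∧ (∀ x ∈ (f : Sym2 V), x ∈ K))

open Finset

theorem SimpleGraph.CliqueFree.card_edgeFinset_le_sq_div_four {W : Type*} [Fintype W]
    {H : SimpleGraph W} [DecidableRel H.Adj] (h : H.CliqueFree 3) :
    #H.edgeFinset ≤ Fintype.card W ^ 2 / 4 := by
  have : #H.edgeFinset ≤ _ := h.card_edgeFinset_le (r := 2)
  rw [Nat.choose_eq_zero_of_lt (Nat.mod_lt _ two_pos), add_zero] at this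
  exact this.trans (Nat.div_le_div_right (c := 4) (by omega))

namespace Sym2

variable {α : Type*} [DecidableEq α]

theorem toFinset_subset_iff {e : Sym2 α} {K : Finset α} : e.toFinset ⊆ K ↔ ∀ x ∈ e, x ∈ K := by
  simp only [subset_iff, mem_toFinset]

theorem toFinset_union_eq_of_card_le {e f : Sym2 α} (he : ¬e.IsDiag) (hf : ¬f.IsDiag)
    (hef : Disjoint e.toFinset f.toFinset) {K : Finset α} (hK : #K ≤ 4)
    (heK : e.toFinset ⊆ K) (hfK : f.toFinset ⊆ K) : e.toFinset ∪ f.toFinset = K :=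
  eq_of_subset_of_card_le (union_subset heK hfK) <| by
    rwa [card_union_of_disjoint hef, card_toFinset_of_not_isDiag _ he,
      card_toFinset_of_not_isDiag _ hf]

end Sym2

section Matching

variable {V : Type*} [DecidableEq V] {G : SimpleGraph V} {M : Finset (Sym2 V)}

theorem disjoint_toFinset_of_matching
    (hM : ∀ e ∈ M, ∀ f ∈ M, e ≠ f → ∀ v : V, v ∈ e → v ∉ f)
    {e f : Sym2 V} (he : e ∈ M) (hf : f ∈ M) (hef : e ≠ f) :
    Disjoint e.toFinset f.toFinset :=
  disjoint_left.2 fun v hve hvf =>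
    hM e he f hf hef v (Sym2.mem_toFinset.1 hve) (Sym2.mem_toFinset.1 hvf)

theorem eq_toFinset_union_of_isNClique_four (hMG : ∀ e ∈ M, e ∈ G.edgeSet)
    (hM : ∀ e ∈ M, ∀ f ∈ M, e ≠ f → ∀ v : V, v ∈ e → v ∉ f)
    {e f : Sym2 V} (he : e ∈ M) (hf : f ∈ M) (hef : e ≠ f)
    {K : Finset V} (hK : G.IsNClique 4 K) (heK : ∀ x ∈ e, x ∈ K) (hfK : ∀ x ∈ f, x ∈ K) :
    K = e.toFinset ∪ f.toFinset :=
  (Sym2.toFinset_union_eq_of_card_le (G.not_isDiag_of_mem_edgeSet (hMG e he))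
    (G.not_isDiag_of_mem_edgeSet (hMG f hf)) (disjoint_toFinset_of_matching hM he hf hef)
    hK.card_eq.le (Sym2.toFinset_subset_iff.2 heK) (Sym2.toFinset_subset_iff.2 hfK)).symm

theorem auxGraph_adj_iff (hMG : ∀ e ∈ M, e ∈ G.edgeSet)
    (hM : ∀ e ∈ M, ∀ f ∈ M, e ≠ f → ∀ v : V, v ∈ e → v ∉ f) {a b : {e // e ∈ M}} :
    (auxGraph G M).Adj a b ↔
      a ≠ b ∧ G.IsNClique 4 ((a : Sym2 V).toFinset ∪ (b : Sym2 V).toFinset) := by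
  rw [auxGraph, fromRel_adj]
  constructor
  · rintro ⟨hab, ⟨K, hK, haK, hbK⟩ | ⟨K, hK, hbK, haK⟩⟩
    · rw [← eq_toFinset_union_of_isNClique_four hMG hM a.2 b.2 (Subtype.coe_ne_coe.2 hab) hK
        haK hbK]
      exact ⟨hab, hK⟩
    · rw [union_comm, ← eq_toFinset_union_of_isNClique_four hMG hM b.2 a.2
        (Subtype.coe_ne_coe.2 hab.symm) hK hbK haK]
      exact ⟨hab, hK⟩
  · rintro ⟨hab, hK⟩
    refine ⟨hab, .inl ⟨_, hK, fun x hx => ?_, fun x hx => ?_⟩⟩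
    · exact mem_union_left _ (Sym2.mem_toFinset.2 hx)
    · exact mem_union_right _ (Sym2.mem_toFinset.2 hx)

theorem auxGraph_cliqueFree_three (hK : G.CliqueFree 5) (hMG : ∀ e ∈ M, e ∈ G.edgeSet)
    (hM : ∀ e ∈ M, ∀ f ∈ M, e ≠ f → ∀ v : V, v ∈ e → v ∉ f) :
    (auxGraph G M).CliqueFree 3 := by
  intro s hs
  obtain ⟨a, b, c, hab, hac, hbc, rfl⟩ := is3Clique_iff.1 hs
  rw [auxGraph_adj_iff hMG hM] at hab hac hbc
  have adj_of_mem {d : {e // e ∈ M}} (hdc : d ≠ c)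
      (hK4 : G.IsNClique 4 ((d : Sym2 V).toFinset ∪ (c : Sym2 V).toFinset))
      {v x : V} (hv : v ∈ (c : Sym2 V).toFinset) (hx : x ∈ (d : Sym2 V).toFinset) :
      G.Adj v x := by
    have hxc := disjoint_left.1
      (disjoint_toFinset_of_matching hM d.2 c.2 (Subtype.coe_ne_coe.2 hdc)) hx
    exact hK4.isClique (mem_union_right _ hv) (mem_union_left _ hx) (ne_of_mem_of_not_mem hv hxc)
  obtain ⟨v, hv⟩ : ∃ v, v ∈ (c : Sym2 V).toFinset := ⟨_, Sym2.mem_toFinset.2 (Sym2.out_fst_mem _)⟩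
  have hv_adj : ∀ x ∈ (a : Sym2 V).toFinset ∪ (b : Sym2 V).toFinset, G.Adj v x := by
    intro x hx
    rcases mem_union.1 hx with hxa | hxb
    · exact adj_of_mem hac.1 hac.2 hv hxa
    · exact adj_of_mem hbc.1 hbc.2 hv hxb
  exact hK _ (hab.2.insert hv_adj)

theorem ncard_isNClique_four_le_card_edgeFinset_auxGraph [DecidableRel (auxGraph G M).Adj]
    (hMG : ∀ e ∈ M, e ∈ G.edgeSet)
    (hM : ∀ e ∈ M, ∀ f ∈ M, e ≠ f → ∀ v : V, v ∈ e → v ∉ f) :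
    Set.ncard {K : Finset V | G.IsNClique 4 K ∧ ∃ e ∈ M, ∃ f ∈ M, e ≠ f ∧
      (∀ x ∈ e, x ∈ K) ∧ (∀ x ∈ f, x ∈ K)} ≤ #(auxGraph G M).edgeFinset := by
  let edgeUnion : Sym2 {e // e ∈ M} → Finset V :=
    Sym2.lift ⟨fun a b => (a : Sym2 V).toFinset ∪ (b : Sym2 V).toFinset, fun _ _ => union_comm _ _⟩
  calc _ ≤ ((auxGraph G M).edgeFinset.image edgeUnion : Set (Finset V)).ncard := by
        refine Set.ncard_le_ncard ?_ (finite_toSet _)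
        rintro K ⟨hK, e, he, f, hf, hef, heK, hfK⟩
        have hKef := eq_toFinset_union_of_isNClique_four hMG hM he hf hef hK heK hfK
        refine mem_image.2 ⟨s(⟨e, he⟩, ⟨f, hf⟩), ?_, hKef.symm⟩
        rw [mem_edgeFinset, mem_edgeSet, auxGraph_adj_iff hMG hM, ← hKef]
        exact ⟨Subtype.coe_ne_coe.1 hef, hK⟩
    _ = #((auxGraph G M).edgeFinset.image edgeUnion) := Set.ncard_coe_finset _
    _ ≤ #(auxGraph G M).edgeFinset := card_image_le

end Matching

/-- If `G` is `K₅`-free and `M` is a matching in `G`, then the auxiliary graph `H`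
on `M` is triangle-free, and the number of copies of `K₄` in `G` containing two
edges of `M` is at most `⌊|M|²/4⌋`. -/
theorem stmt4 {V : Type*} (G : SimpleGraph V) (hK : G.CliqueFree 5)
    (M : Finset (Sym2 V)) (hMG : ∀ e ∈ M, e ∈ G.edgeSet)
    (hM : ∀ e ∈ M, ∀ f ∈ M, e ≠ f → ∀ v : V, v ∈ e → v ∉ f) :
    (auxGraph G M).CliqueFree 3 ∧
    Set.ncard {K : Finset V | G.IsNClique 4 K ∧ ∃ e ∈ M, ∃ f ∈ M, e ≠ f ∧
      (∀ x ∈ e, x ∈ K) ∧ (∀ x ∈ f, x ∈ K)} ≤ M.card ^ 2 / 4 := by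
  classical
  have htriangleFree := auxGraph_cliqueFree_three hK hMG hM
  refine ⟨htriangleFree, ?_⟩
  calc _ ≤ #(auxGraph G M).edgeFinset := ncard_isNClique_four_le_card_edgeFinset_auxGraph hMG hM
    _ ≤ Fintype.card {e // e ∈ M} ^ 2 / 4 := htriangleFree.card_edgeFinset_le_sq_div_four
    _ = #M ^ 2 / 4 := by rw [Fintype.card_coe]
end

section
/- For integers n and real-valued consideration of the function f(x) = ⌊x²/16⌋ + ⌊(n-x)²/4⌋ on even integers x with 2 ≤ x ≤ n: f(x-2) ≥ f(x) whenever x ≤ (4n+1)/5, and f(x-2) ≤ f(x) whenever x ≥ (4n+9)/5. Consequently, for even n, max over even x in [2,n] of f(x) equals max{⌊(n-2)²/4⌋, ⌊n²/16⌋}, which equals ⌊(n-2)²/4⌋. -/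
/-!
Write `f x = ⌊x²/16⌋ + ⌊(n-x)²/4⌋`. For `x = 2(a+1)` the quarter-square increment
`⌊(a+1)²/4⌋ - ⌊a²/4⌋ = ⌊(a+1)/2⌋` gives the exact step identity
`f (x-2) + ⌊x/4⌋ = f x + (n - x + 1)`, and both monotonicity claims are linear arithmetic from it.
The maximum needs no monotonicity: `16 f x ≤ x² + 4(n-x)²`, a convex quadratic whose largest value
on `[2, n]` is `4 + 4(n-2)²` at `x = 2` when `n` is even, and since `4 ∣ n - 2` the extra `4` is lost
to the floor.
-/

def floorSum (n x : ℕ) : ℕ := x ^ 2 / 16 + (n - x) ^ 2 / 4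

theorem Nat.succ_sq_div_four (a : ℕ) : (a + 1) ^ 2 / 4 = a ^ 2 / 4 + (a + 1) / 2 := by
  rcases Nat.even_or_odd' a with ⟨k, rfl | rfl⟩
  · rw [show (2 * k + 1) ^ 2 = 1 + 4 * (k ^ 2 + k) by ring,
      show (2 * k) ^ 2 = 4 * k ^ 2 by ring]
    omega
  · rw [show (2 * k + 1 + 1) ^ 2 = 4 * (k + 1) ^ 2 by ring,
      show (2 * k + 1) ^ 2 = 1 + 4 * (k ^ 2 + k) by ring, show (k + 1) ^ 2 = k ^ 2 + 2 * k + 1 by ring]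
    omega

theorem Nat.add_two_sq_div_four (m : ℕ) : (m + 2) ^ 2 / 4 = m ^ 2 / 4 + (m + 1) := by
  rw [show (m + 2) ^ 2 = m ^ 2 + 4 * (m + 1) by ring]
  omega

theorem floorSum_sub_two_add_div_four {n x : ℕ} (hx : Even x) (h2 : 2 ≤ x) (hxn : x ≤ n) :
    floorSum n (x - 2) + x / 4 = floorSum n x + (n - x + 1) := by
  obtain ⟨a, rfl⟩ : ∃ a, x = 2 * (a + 1) := by
    obtain ⟨r, rfl⟩ := hx
    exact ⟨r - 1, by omega⟩
  have hsq (b : ℕ) : (2 * b) ^ 2 / 16 = b ^ 2 / 4 := by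
    rw [mul_pow, show 16 = 2 ^ 2 * 4 by rfl, ← Nat.div_div_eq_div_mul,
      Nat.mul_div_cancel_left _ (by positivity)]
  unfold floorSum
  rw [show 2 * (a + 1) - 2 = 2 * a by omega, show n - 2 * a = n - 2 * (a + 1) + 2 by omega,
    hsq, hsq, Nat.add_two_sq_div_four, Nat.succ_sq_div_four a]
  omega

theorem floorSum_le_floorSum_sub_two {n x : ℕ} (hx : Even x) (h2 : 2 ≤ x) (hxn : x ≤ n)
    (h : 5 * x ≤ 4 * n + 4) : floorSum n x ≤ floorSum n (x - 2) := by
  have := floorSum_sub_two_add_div_four hx h2 hxn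
  omega

theorem floorSum_sub_two_le_floorSum {n x : ℕ} (hx : Even x) (h2 : 2 ≤ x) (hxn : x ≤ n)
    (h : 4 * n + 6 ≤ 5 * x) : floorSum n (x - 2) ≤ floorSum n x := by
  have := floorSum_sub_two_add_div_four hx h2 hxn
  obtain ⟨r, rfl⟩ := hx
  omega

theorem sq_add_four_mul_sq_le {n x : ℕ} (hn : Even n) (h2 : 2 ≤ x) (hxn : x ≤ n) :
    x ^ 2 + 4 * (n - x) ^ 2 ≤ 4 + 4 * (n - 2) ^ 2 := by
  obtain ⟨y, rfl⟩ : ∃ y, x = y + 2 := ⟨x - 2, by omega⟩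
  obtain ⟨m, rfl⟩ : ∃ m, n = y + 2 + m := ⟨n - (y + 2), by omega⟩
  rw [show y + 2 + m - (y + 2) = m by omega, show y + 2 + m - 2 = y + m by omega]
  have hcases : y = 0 ∨ 2 ≤ y ∨ 1 ≤ m := by
    obtain ⟨k, hk⟩ := hn
    omega
  rcases hcases with rfl | hy | hm
  · simp
  · nlinarith
  · nlinarith

theorem floorSum_le_of_even {n x : ℕ} (hn : Even n) (h2 : 2 ≤ x) (hxn : x ≤ n) :
    floorSum n x ≤ (n - 2) ^ 2 / 4 := by
  have hbound := sq_add_four_mul_sq_le hn h2 hxn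
  obtain ⟨k, hk⟩ : ∃ k, n - 2 = 2 * k := by
    obtain ⟨r, rfl⟩ := hn
    exact ⟨r - 1, by omega⟩
  rw [hk, mul_pow] at hbound ⊢
  unfold floorSum
  omega

theorem floorSum_two (n : ℕ) : floorSum n 2 = (n - 2) ^ 2 / 4 := by
  simp [floorSum]

/-- Properties of `f(x) = ⌊x²/16⌋ + ⌊(n-x)²/4⌋` on even integers `2 ≤ x ≤ n`
(natural number division is floor division): `f` increases when `x` decreases by `2`
for `x ≤ (4n+1)/5`, decreases for `x ≥ (4n+9)/5`, and for even `n` its maximum is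
`max{⌊(n-2)²/4⌋, ⌊n²/16⌋} = ⌊(n-2)²/4⌋`. -/
theorem stmt5 (n : ℕ) (hn : 0 < n) :
    (∀ x : ℕ, 2 ≤ x → x ≤ n → Even x → 5 * x ≤ 4 * n + 1 →
      x ^ 2 / 16 + (n - x) ^ 2 / 4 ≤ (x - 2) ^ 2 / 16 + (n - (x - 2)) ^ 2 / 4) ∧
    (∀ x : ℕ, 2 ≤ x → x ≤ n → Even x → 4 * n + 9 ≤ 5 * x →
      (x - 2) ^ 2 / 16 + (n - (x - 2)) ^ 2 / 4 ≤ x ^ 2 / 16 + (n - x) ^ 2 / 4) ∧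
    (Even n →
      IsGreatest {m | ∃ x : ℕ, 2 ≤ x ∧ x ≤ n ∧ Even x ∧
          x ^ 2 / 16 + (n - x) ^ 2 / 4 = m}
        (max ((n - 2) ^ 2 / 4) (n ^ 2 / 16)) ∧
      max ((n - 2) ^ 2 / 4) (n ^ 2 / 16) = (n - 2) ^ 2 / 4) := by
  refine ⟨fun x h2 hxn hx h => floorSum_le_floorSum_sub_two hx h2 hxn (by omega),
    fun x h2 hxn hx h => floorSum_sub_two_le_floorSum hx h2 hxn (by omega), fun he => ?_⟩
  have hn2 : 2 ≤ n := by
    obtain ⟨r, rfl⟩ := he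
    omega
  have hmax : max ((n - 2) ^ 2 / 4) (n ^ 2 / 16) = (n - 2) ^ 2 / 4 :=
    max_eq_left (by simpa [floorSum] using floorSum_le_of_even he hn2 le_rfl)
  rw [hmax]
  refine ⟨⟨⟨2, le_rfl, hn2, even_two, floorSum_two n⟩, ?_⟩, rfl⟩
  rintro _ ⟨x, h2, hxn, -, rfl⟩
  exact floorSum_le_of_even he h2 hxn
end

section
/- Let r > s ≥ 1 with r ≥ 2s+1. Then the graph K_{s+1} ∨ T_{r-s-1}(n-s-1) is B_{r,s}-free, i.e., it contains no two copies of K_r sharing exactly s vertices. -/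
open SimpleGraph

open Finset

/-! A copy of `K_r` meets the Turán part in a clique, hence in at most `r - s - 1` vertices (one
per part), so it contains all `s + 1` vertices of `K_{s+1}`. Any two copies of `K_r` therefore
share at least `s + 1` vertices. -/

namespace SimpleGraph

variable {α β : Type*} {G : SimpleGraph α} {H : SimpleGraph β}

lemma IsClique.card_le_of_cliqueFree {k : ℕ} {s : Finset α} (hs : G.IsClique s)
    (hG : G.CliqueFree (k + 1)) : #s ≤ k := by
  by_contra! hlt
  obtain ⟨t, hts, htk⟩ := exists_subset_card_eq hlt
  exact hG t ⟨hs.subset hts, htk⟩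

lemma IsClique.toRight_of_join {S : Finset (α ⊕ β)} (hS : (G.join H).IsClique S) :
    H.IsClique S.toRight := fun _ ha _ hb hab =>
  hS (mem_toRight.1 ha) (mem_toRight.1 hb) (Sum.inr_injective.ne hab)

lemma IsNClique.toLeft_eq_univ_of_join [Fintype α] {k r : ℕ} {S : Finset (α ⊕ β)}
    (hS : (G.join H).IsNClique r S) (hH : H.CliqueFree (k + 1))
    (hr : Fintype.card α + k ≤ r) : S.toLeft = univ := by
  have hright : #S.toRight ≤ k := hS.isClique.toRight_of_join.card_le_of_cliqueFree hH
  have hsplit : #S.toLeft + #S.toRight = r := card_toLeft_add_card_toRight.trans hS.card_eq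
  exact eq_univ_of_card _ (le_antisymm (card_le_univ _) (by omega))

end SimpleGraph

theorem stmt8_general (r s n : ℕ) (hs : 1 ≤ s) (hr : 2 * s + 1 ≤ r) :
    BFree ((⊤ : SimpleGraph (Fin (s + 1))).join (turanGraph (n - s - 1) (r - s - 1)))
      r s := by
  -- `turanGraph m 0 = ⊤`, so the bound needs `0 < r - s - 1`, i.e. `1 ≤ s`.
  have hturan : (turanGraph (n - s - 1) (r - s - 1)).CliqueFree (r - s - 1 + 1) :=
    turanGraph_cliqueFree (by omega)
  have hsize : Fintype.card (Fin (s + 1)) + (r - s - 1) ≤ r := by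
    rw [Fintype.card_fin]; omega
  intro S T hS hT hST
  have hcommon : (S ∩ T).toLeft = univ := by
    rw [toLeft_inter, hS.toLeft_eq_univ_of_join hturan hsize,
      hT.toLeft_eq_univ_of_join hturan hsize, inter_self]
  have hle := card_toLeft_le (u := S ∩ T)
  rw [hcommon, card_univ, Fintype.card_fin] at hle
  omega

/-- For `r > s ≥ 1` with `r ≥ 2s+1`, the graph `K_{s+1} ∨ T_{r-s-1}(n-s-1)` is
`B_{r,s}`-free. -/
theorem stmt8 (r s n : ℕ) (hs : 1 ≤ s) (hsr : s < r) (hr : 2 * s + 1 ≤ r) :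
    BFree ((⊤ : SimpleGraph (Fin (s + 1))).join (turanGraph (n - s - 1) (r - s - 1)))
      r s :=
  stmt8_general r s n hs hr
end

section
/- Let P = (a_1, …, a_t) be an s-sum-free partition of r (so a_1 ≥ … ≥ a_t > 0, Σa_i = r, and no subset of the a_i sums to s). Let G_P be the graph on vertex classes X_1, …, X_t of sizes within one of n/t, where each G_P[X_i] is a disjoint union of copies of K_{a_i} (assuming a_i divides |X_i|) and all edges between distinct classes are present. Then G_P is B_{r,s}-free. -/
open SimpleGraph

/-- The graph `G_P`: for each class `i : Fin t`, the class `X_i` consists of `b i`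
disjoint copies of `K_{a i}` (a vertex is `(i, c, x)` with `c < b i` the copy index
and `x < a i` the position in the copy); all edges between distinct classes are
present; within a class, two distinct vertices are adjacent iff they are in the
same copy. -/
def GP (t : ℕ) (a b : Fin t → ℕ) :
    SimpleGraph {p : Fin t × ℕ × ℕ // p.2.1 < b p.1 ∧ p.2.2 < a p.1} where
  Adj p q := p ≠ q ∧ (p.val.1 ≠ q.val.1 ∨ p.val.2.1 = q.val.2.1)
  symm := by
    constructor
    rintro p q ⟨h1, h2⟩
    exact ⟨h1.symm, by tauto⟩
  loopless := by constructor; rintro p ⟨h1, _⟩; exact h1 rfl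

/-! Every `K_r` of `G_P` with `r = ∑ aᵢ` meets each class `Xᵢ` in a whole copy of `K_{aᵢ}`: inside
a class a clique stays in one copy, so it has at most `aᵢ` vertices there, and the total forces
equality. Two such cliques therefore meet each class in either nothing or the same copy, so the
size of their intersection is `∑_{i ∈ I} aᵢ` for some set of classes `I`. -/

namespace GP

abbrev Vert (t : ℕ) (a b : Fin t → ℕ) : Type :=
  {p : Fin t × ℕ × ℕ // p.2.1 < b p.1 ∧ p.2.2 < a p.1}

variable {t : ℕ} {a b : Fin t → ℕ}

def classPart (S : Finset (Vert t a b)) (i : Fin t) : Finset (Vert t a b) :=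
  S.filter fun p => p.val.1 = i

lemma card_le_of_forall_mem_copy {U : Finset (Vert t a b)} {i : Fin t} {c : ℕ}
    (hU : ∀ p ∈ U, p.val.1 = i ∧ p.val.2.1 = c) : U.card ≤ a i := by
  have hmaps : ∀ p ∈ U, p.val.2.2 ∈ Finset.range (a i) := fun p hp => by
    rw [Finset.mem_range, ← (hU p hp).1]
    exact p.2.2
  have hinj : Set.InjOn (fun p : Vert t a b => p.val.2.2) U := fun p hp q hq hx => by
    obtain ⟨hpi, hpc⟩ := hU p hp
    obtain ⟨hqi, hqc⟩ := hU q hq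
    exact Subtype.ext (Prod.ext (hpi.trans hqi.symm) (Prod.ext (hpc.trans hqc.symm) hx))
  simpa using Finset.card_le_card_of_injOn _ hmaps hinj

lemma subset_of_card_eq_of_forall_mem_copy {U W : Finset (Vert t a b)} {i : Fin t} {c : ℕ}
    (hU : ∀ p ∈ U, p.val.1 = i ∧ p.val.2.1 = c) (hW : ∀ p ∈ W, p.val.1 = i ∧ p.val.2.1 = c)
    (hcard : U.card = a i) : W ⊆ U := by
  intro q hqW
  by_contra hqU
  have hins : ∀ p ∈ insert q U, p.val.1 = i ∧ p.val.2.1 = c := by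
    simpa only [Finset.forall_mem_insert] using ⟨hW q hqW, hU⟩
  have := card_le_of_forall_mem_copy hins
  rw [Finset.card_insert_of_notMem hqU] at this
  omega

lemma mem_copy_of_isClique {S : Finset (Vert t a b)} (hS : (GP t a b).IsClique (S : Set _))
    {p q : Vert t a b} (hp : p ∈ S) (hq : q ∈ S) (hpq : p.val.1 = q.val.1) :
    q.val.1 = p.val.1 ∧ q.val.2.1 = p.val.2.1 := by
  refine ⟨hpq.symm, ?_⟩
  obtain rfl | hne := eq_or_ne q p
  · rfl
  · exact (hS hq hp hne).2.resolve_left (fun h => h hpq.symm)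

lemma card_classPart_le_of_isClique {S : Finset (Vert t a b)} (hS : (GP t a b).IsClique (S : Set _))
    (i : Fin t) : (classPart S i).card ≤ a i := by
  obtain hempty | ⟨p, hp⟩ := (classPart S i).eq_empty_or_nonempty
  · simp [hempty]
  · rw [classPart, Finset.mem_filter] at hp
    refine card_le_of_forall_mem_copy (c := p.val.2.1) fun q hq => ?_
    rw [classPart, Finset.mem_filter] at hq
    rw [← hp.2]
    exact mem_copy_of_isClique hS hp.1 hq.1 (hp.2.trans hq.2.symm)

lemma card_classPart_of_isNClique {S : Finset (Vert t a b)}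
    (hS : (GP t a b).IsNClique (∑ i, a i) S) (i : Fin t) : (classPart S i).card = a i := by
  have htotal : ∑ j, (classPart S j).card = ∑ j, a j := by
    rw [← hS.card_eq]
    exact (Finset.card_eq_sum_card_fiberwise fun p _ => Finset.mem_univ p.val.1).symm
  exact (Finset.sum_eq_sum_iff_of_le fun j _ => card_classPart_le_of_isClique hS.isClique j).mp htotal i
    (Finset.mem_univ i)

lemma card_classPart_inter {S T : Finset (Vert t a b)}
    (hS : (GP t a b).IsNClique (∑ i, a i) S) (hT : (GP t a b).IsNClique (∑ i, a i) T)
    {i : Fin t} (hne : (classPart (S ∩ T) i).Nonempty) : (classPart (S ∩ T) i).card = a i := by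
  obtain ⟨p, hp⟩ := hne
  simp only [classPart, Finset.mem_filter, Finset.mem_inter] at hp
  obtain ⟨⟨hpS, hpT⟩, rfl⟩ := hp
  have hcopy : ∀ U : Finset (Vert t a b), (GP t a b).IsClique (U : Set _) → p ∈ U →
      ∀ q ∈ classPart U p.val.1, q.val.1 = p.val.1 ∧ q.val.2.1 = p.val.2.1 :=
    fun U hU hpU q hq => by
      rw [classPart, Finset.mem_filter] at hq
      exact mem_copy_of_isClique hU hpU hq.1 hq.2.symm
  have hTS : classPart T p.val.1 ⊆ classPart S p.val.1 :=
    subset_of_card_eq_of_forall_mem_copy (hcopy S hS.isClique hpS) (hcopy T hT.isClique hpT)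
      (card_classPart_of_isNClique hS _)
  have hinter : classPart (S ∩ T) p.val.1 = classPart T p.val.1 := by
    rw [classPart, Finset.filter_inter_distrib, ← classPart, ← classPart,
      Finset.inter_eq_right.mpr hTS]
  rw [hinter, card_classPart_of_isNClique hT]

theorem card_inter_eq_sum {S T : Finset (Vert t a b)}
    (hS : (GP t a b).IsNClique (∑ i, a i) S) (hT : (GP t a b).IsNClique (∑ i, a i) T) :
    (S ∩ T).card = ∑ i ∈ Finset.univ.filter (fun i => (classPart (S ∩ T) i).Nonempty), a i := by
  rw [Finset.card_eq_sum_card_fiberwise fun p (_ : p ∈ S ∩ T) => Finset.mem_univ p.val.1,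
    Finset.sum_filter]
  refine Finset.sum_congr rfl fun i _ => ?_
  split_ifs with hne
  · exact card_classPart_inter hS hT hne
  · exact Finset.card_eq_zero.mpr (Finset.not_nonempty_iff_eq_empty.mp hne)

end GP

theorem stmt10_general (r s t : ℕ) (a : Fin t → ℕ)
    (hsum : ∑ i, a i = r)
    (hfree : ∀ I : Finset (Fin t), ∑ i ∈ I, a i ≠ s)
    (b : Fin t → ℕ) :
    BFree (GP t a b) r s := by
  subst hsum
  intro S T hS hT
  rw [GP.card_inter_eq_sum hS hT]
  exact hfree _

/-- If `(a_1, …, a_t)` is an `s`-sum-free partition of `r` and each class of `G_P`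
has size `⌊n/t⌋` or `⌊n/t⌋ + 1`, then `G_P` is `B_{r,s}`-free. -/
theorem stmt10 (r s t n : ℕ) (a : Fin t → ℕ) (ha : Antitone a)
    (hpos : ∀ i, 0 < a i) (hsum : ∑ i, a i = r)
    (hfree : ∀ I : Finset (Fin t), ∑ i ∈ I, a i ≠ s)
    (b : Fin t → ℕ) (hsize : ∀ i, b i * a i = n / t ∨ b i * a i = n / t + 1) :
    BFree (GP t a b) r s :=
  stmt10_general r s t a hsum hfree b
end

section
/- In a B_{4,2}-free graph G, every edge is contained in at most one copy of K_5; consequently the number of copies of K_5 in G is O(n²). -/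
open SimpleGraph

/-!
Two distinct `K₅`'s `K₁, K₂` sharing an edge `uv` contain two `K₄`'s meeting exactly in
`{u, v}`: the remainders `K₁ \ {u, v}` and `K₂ \ {u, v}` are distinct triples, and two
distinct triples always contain disjoint pairs (the same works for `K_{s+3}`'s sharing `s`
vertices). Hence in a `B_{4,2}`-free graph every pair of vertices lies in at most one `K₅`,
so there are at most `n.choose 2` of them.
-/

open Finset

theorem Finset.exists_disjoint_pairs_of_card_eq_three {α : Type*} [DecidableEq α]
    {X Y : Finset α} (hX : #X = 3) (hY : #Y = 3) (hXY : X ≠ Y) :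
    ∃ A ⊆ X, ∃ B ⊆ Y, #A = 2 ∧ #B = 2 ∧ Disjoint A B := by
  obtain ⟨x, hxX, hxY⟩ : ∃ x ∈ X, x ∉ Y :=
    not_subset.1 fun h ↦ hXY (eq_of_subset_of_card_le h (by omega))
  obtain ⟨y, hyY, hyX⟩ : ∃ y ∈ Y, y ∉ X :=
    not_subset.1 fun h ↦ hXY (eq_of_subset_of_card_le h (by omega)).symm
  obtain ⟨b, hb⟩ : (Y.erase y).Nonempty := by
    rw [← card_pos, card_erase_of_mem hyY]; omega
  obtain ⟨a, ha⟩ : (X \ {x, b}).Nonempty := by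
    have := le_card_sdiff {x, b} X
    have := card_le_two (a := x) (b := b)
    rw [← card_pos]; omega
  simp only [mem_sdiff, mem_insert, mem_singleton, not_or] at ha
  simp only [mem_erase] at hb
  refine ⟨{x, a}, ?_, {y, b}, ?_, card_pair (Ne.symm ha.2.1), card_pair (Ne.symm hb.1), ?_⟩
  · simp [insert_subset_iff, hxX, ha.1]
  · simp [insert_subset_iff, hyY, hb.2]
  · simp only [disjoint_insert_left, disjoint_insert_right, disjoint_singleton, mem_insert,
      mem_singleton, not_or]
    exact ⟨⟨fun h ↦ hyX (h ▸ hxX), fun h ↦ hyX (h ▸ ha.1)⟩,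
      fun h ↦ hxY (h ▸ hb.2), ha.2.2⟩

section

variable {V : Type*} [DecidableEq V] {G : SimpleGraph V}

theorem BFree.eq_of_le_card_inter {s : ℕ} (hB : BFree G (s + 2) s) {K₁ K₂ : Finset V}
    (h₁ : G.IsNClique (s + 3) K₁) (h₂ : G.IsNClique (s + 3) K₂) (hs : s ≤ #(K₁ ∩ K₂)) :
    K₁ = K₂ := by
  by_contra hne
  obtain ⟨P, hP, hPcard⟩ := exists_subset_card_eq hs
  have hP₁ : P ⊆ K₁ := hP.trans inter_subset_left
  have hP₂ : P ⊆ K₂ := hP.trans inter_subset_right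
  have hX : #(K₁ \ P) = 3 := by rw [card_sdiff_of_subset hP₁, h₁.card_eq]; omega
  have hY : #(K₂ \ P) = 3 := by rw [card_sdiff_of_subset hP₂, h₂.card_eq]; omega
  have hXY : K₁ \ P ≠ K₂ \ P := fun h ↦ hne <| by
    rw [← sdiff_union_of_subset hP₁, h, sdiff_union_of_subset hP₂]
  obtain ⟨A, hA, B, hB', hAcard, hBcard, hAB⟩ :=
    exists_disjoint_pairs_of_card_eq_three hX hY hXY
  have hS : G.IsNClique (s + 2) (P ∪ A) := by
    refine ⟨h₁.isClique.subset (coe_subset.2 (union_subset hP₁ (hA.trans sdiff_subset))), ?_⟩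
    rw [card_union_of_disjoint (disjoint_sdiff.mono_right hA), hPcard, hAcard]
  have hT : G.IsNClique (s + 2) (P ∪ B) := by
    refine ⟨h₂.isClique.subset (coe_subset.2 (union_subset hP₂ (hB'.trans sdiff_subset))), ?_⟩
    rw [card_union_of_disjoint (disjoint_sdiff.mono_right hB'), hPcard, hBcard]
  apply hB _ _ hS hT
  rw [← union_inter_distrib_left, disjoint_iff_inter_eq_empty.1 hAB, union_empty, hPcard]

theorem cliqueCount_le_choose_two [Fintype V] {r : ℕ} (hr : 2 ≤ r)
    (h : ∀ K₁ K₂ : Finset V, G.IsNClique r K₁ → G.IsNClique r K₂ → 2 ≤ #(K₁ ∩ K₂) → K₁ = K₂) :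
    cliqueCount G r ≤ (Fintype.card V).choose 2 := by
  classical
  have hcount : cliqueCount G r = #(G.cliqueFinset r) := by
    rw [← Set.ncard_coe_finset, coe_cliqueFinset]; rfl
  rw [hcount, ← card_univ, ← card_powersetCard]
  refine card_le_card_of_forall_subsingleton (fun K P ↦ P ⊆ K) (fun K hK ↦ ?_) ?_
  · obtain ⟨P, hPK, hP⟩ := exists_subset_card_eq ((mem_cliqueFinset_iff.1 hK).card_eq ▸ hr)
    exact ⟨P, mem_powersetCard.2 ⟨subset_univ P, hP⟩, hPK⟩
  · rintro P hP K₁ ⟨hK₁, hP₁⟩ K₂ ⟨hK₂, hP₂⟩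
    refine h K₁ K₂ (mem_cliqueFinset_iff.1 hK₁) (mem_cliqueFinset_iff.1 hK₂) ?_
    exact (mem_powersetCard.1 hP).2 ▸ card_le_card (subset_inter hP₁ hP₂)

end

/-- In a `B_{4,2}`-free graph, every edge lies in at most one copy of `K₅`;
consequently the number of copies of `K₅` in a `B_{4,2}`-free graph on `n`
vertices is `O(n²)`. -/
theorem stmt14 :
    (∀ (V : Type*) [DecidableEq V] (G : SimpleGraph V), BFree G 4 2 →
      ∀ u v : V, G.Adj u v →
        Set.ncard {K : Finset V | G.IsNClique 5 K ∧ u ∈ K ∧ v ∈ K} ≤ 1) ∧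
    ∃ C : ℝ, 0 < C ∧ ∀ (n : ℕ) (G : SimpleGraph (Fin n)), BFree G 4 2 →
      (cliqueCount G 5 : ℝ) ≤ C * (n : ℝ) ^ 2 := by
  constructor
  · intro V _ G hB u v huv
    have hsub : {K : Finset V | G.IsNClique 5 K ∧ u ∈ K ∧ v ∈ K}.Subsingleton := by
      rintro K₁ ⟨h₁, hu₁, hv₁⟩ K₂ ⟨h₂, hu₂, hv₂⟩
      refine hB.eq_of_le_card_inter h₁ h₂ ?_
      calc 2 = #{u, v} := (card_pair huv.ne).symm
        _ ≤ #(K₁ ∩ K₂) := card_le_card (by simp [insert_subset_iff, *])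
    exact (Set.ncard_le_one_iff hsub.finite).2 (hsub · ·)
  · refine ⟨1, one_pos, fun n G hB ↦ ?_⟩
    have hcount : cliqueCount G 5 ≤ n.choose 2 := by
      simpa using cliqueCount_le_choose_two (by norm_num) fun _ _ ↦ hB.eq_of_le_card_inter
    calc (cliqueCount G 5 : ℝ) ≤ n ^ 2 := by exact_mod_cast hcount.trans (n.choose_le_pow 2)
      _ = 1 * n ^ 2 := (one_mul _).symm
end
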